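/- arXiv:2506.21242 — 2 statements merged into one kernel-verified Lean document; each statement's English description precedes it below -/
import Mathlib

section
/- Let s ≥ 1 and let A ∈ ℝ^{s×s} be invertible and diagonalizable over ℂ with all eigenvalues of positive real part, b = Aᵀe_s, nodes c ∈ ℝ^s, and suppose bᵀA^{m+1}c^{ℓ−1} = (1/ℓ)·bᵀA^m c^ℓ whenever m ≥ 0, ℓ ≥ 1 and m + 1 + ℓ ≤ p. Fix integers q < p and ℓ with q + 1 ≤ ℓ ≤ p, and let δ^{(ℓ)} ∈ ℝ^s have components δ_i^{(ℓ)} = (c_i^ℓ/ℓ − Σ_j A_{ij} c_j^{ℓ−1})/(ℓ−1)!. Then there exists a constant C > 0, independent of τ and x, such that for all τ > 0 and x > 0: |τx·bᵀ(I + τxA)⁻¹δ^{(ℓ)}| ≤ C·(τx)^{p−ℓ+1} whenever 0 < x < (τ·‖A‖)⁻¹ (‖A‖ the induced matrix norm), and |τx·bᵀ(I + τxA)⁻¹δ^{(ℓ)}| ≤ C for all x > 0. -/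
open MeasureTheory Matrix

noncomputable section

/-- Weighted combination of an `X`-valued stage vector. -/
def vdot {s : ℕ} {X : Type*} [AddCommMonoid X] [Module ℝ X]
    (b : Fin s → ℝ) (v : Fin s → X) : X :=
  ∑ i, b i • v i

/-- A real `s × s` matrix acting componentwise on an `X`-valued stage vector. -/
def matVec {s : ℕ} {X : Type*} [AddCommMonoid X] [Module ℝ X]
    (M : Matrix (Fin s) (Fin s) ℝ) (v : Fin s → X) : Fin s → X :=
  fun i => ∑ j, M i j • v j

/-- The Runge–Kutta stability function `R(r) = 1 + r·bᵀ(I − rA)⁻¹𝟙` at a real argument. -/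
def stabR {s : ℕ} (A : Matrix (Fin s) (Fin s) ℝ) (b : Fin s → ℝ) (r : ℝ) : ℝ :=
  1 + r * (b ⬝ᵥ (((1 : Matrix (Fin s) (Fin s) ℝ) - r • A)⁻¹ *ᵥ (fun _ => (1 : ℝ))))

/-- The Runge–Kutta stability function at a complex argument. -/
def stabC {s : ℕ} (A : Matrix (Fin s) (Fin s) ℝ) (b : Fin s → ℝ) (z : ℂ) : ℂ :=
  1 + z * ((fun i => (b i : ℂ)) ⬝ᵥ
    (((1 : Matrix (Fin s) (Fin s) ℂ) - z • A.map ((↑) : ℝ → ℂ))⁻¹ *ᵥ (fun _ => (1 : ℂ))))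

/-- The standing Runge–Kutta assumptions: an A-stable, stiffly accurate method whose
coefficient matrix is invertible and diagonalizable over `ℂ` with eigenvalues of positive
real part, of classical order `p ≥ 1` and stage order `q ≤ p`, with nodes
`0 ≤ c₁ ≤ ⋯ ≤ c_s = 1`. -/
structure RKData (s : ℕ) (A : Matrix (Fin s) (Fin s) ℝ) (b c : Fin s → ℝ)
    (p q : ℕ) : Prop where
  hs : 0 < s
  hp : 1 ≤ p
  hqp : q ≤ p
  hc_nonneg : ∀ i, 0 ≤ c i
  hc_mono : Monotone c
  hc_last : c ⟨s - 1, Nat.sub_lt hs Nat.one_pos⟩ = 1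
  hA_inv : IsUnit A.det
  hA_diag : ∃ P D : Matrix (Fin s) (Fin s) ℂ, IsUnit P.det ∧ D.IsDiag ∧
    A.map ((↑) : ℝ → ℂ) = P * D * P⁻¹
  hA_eig : ∀ z : ℂ, (A.map ((↑) : ℝ → ℂ)).charpoly.IsRoot z → 0 < z.re
  hAstab : ∀ z : ℂ, z.re ≤ 0 → ‖stabC A b z‖ ≤ 1
  hstiff : ∀ i, b i = A ⟨s - 1, Nat.sub_lt hs Nat.one_pos⟩ i
  horder : ∀ ℓ : ℕ, 1 ≤ ℓ → ℓ ≤ p → ∑ i, b i * c i ^ (ℓ - 1) = 1 / (ℓ : ℝ)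
  hstage : ∀ ℓ : ℕ, 1 ≤ ℓ → ℓ ≤ q → ∀ i,
    ∑ j, A i j * c j ^ (ℓ - 1) = c i ^ ℓ / (ℓ : ℝ)
  hbpow : ∀ m ℓ : ℕ, 1 ≤ ℓ → m + 1 + ℓ ≤ p →
    b ⬝ᵥ ((A ^ (m + 1)) *ᵥ (fun i => c i ^ (ℓ - 1))) =
      (1 / (ℓ : ℝ)) * (b ⬝ᵥ ((A ^ m) *ᵥ (fun i => c i ^ ℓ)))

/-- A time mesh `0 = t₀ < t₁ < ⋯ < t_N = T` on `[0, T]`. -/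
structure TimeMesh (T : ℝ) (N : ℕ) (t : ℕ → ℝ) : Prop where
  hN : 0 < N
  h0 : t 0 = 0
  hT : t N = T
  hinc : ∀ j, j < N → t j < t (j + 1)

/-- Maximal step size `τ_max` of the mesh. -/
def tauMax (t : ℕ → ℝ) (N : ℕ) : ℝ :=
  if h : 1 ≤ N then
    (Finset.Icc 1 N).sup' (Finset.nonempty_Icc.mpr h) (fun j => t j - t (j - 1))
  else 0

/-- Minimal step size `τ_min` of the mesh. -/
def tauMin (t : ℕ → ℝ) (N : ℕ) : ℝ :=
  if h : 1 ≤ N then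
    (Finset.Icc 1 N).inf' (Finset.nonempty_Icc.mpr h) (fun j => t j - t (j - 1))
  else 0

/-- The quasi-uniformity constant `c_Δ` of the mesh. -/
def quasiConst (t : ℕ → ℝ) (N : ℕ) : ℝ :=
  if h : 2 ≤ N then
    (1 / 2) * (Finset.Icc 2 N).sup' (Finset.nonempty_Icc.mpr h)
      (fun i => (t i - t (i - 1)) / (t (i - 1) - t (i - 2)) +
        (t (i - 1) - t (i - 2)) / (t i - t (i - 1)))
  else 1

/-- The graded mesh `t_n = (n τ)^γ`, `τ = T^{1/γ}/N`. -/
def gradedMesh (T γ : ℝ) (N n : ℕ) : ℝ :=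
  ((n : ℝ) * (T ^ (1 / γ) / (N : ℝ))) ^ γ

/-- The Runge–Kutta gCQ value `y_n(x)`. -/
def gcqY {X : Type*} [AddCommGroup X] [Module ℝ X] {s : ℕ}
    (A : Matrix (Fin s) (Fin s) ℝ) (b c : Fin s → ℝ)
    (t : ℕ → ℝ) (f : ℝ → X) (n : ℕ) (x : ℝ) : X :=
  ∑ j ∈ Finset.Icc 1 n,
    (∏ l ∈ Finset.Icc (j + 1) n, stabR A b (-((t l - t (l - 1)) * x))) •
      ((t j - t (j - 1)) •
        vdot b (matVec (((1 : Matrix (Fin s) (Fin s) ℝ) + ((t j - t (j - 1)) * x) • A)⁻¹)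
          (fun i => f (t (j - 1) + c i * (t j - t (j - 1))))))

/-- The Runge–Kutta gCQ approximation `u_n = ∫_0^∞ G(x)(y_n(x)) dx`. -/
def gcqU {X Y : Type*} [NormedAddCommGroup X] [NormedSpace ℂ X]
    [NormedAddCommGroup Y] [NormedSpace ℂ Y] [CompleteSpace Y] {s : ℕ}
    (G : ℝ → X →L[ℂ] Y) (A : Matrix (Fin s) (Fin s) ℝ) (b c : Fin s → ℝ)
    (t : ℕ → ℝ) (f : ℝ → X) (n : ℕ) : Y :=
  ∫ x in Set.Ioi (0 : ℝ), (G x) (gcqY A b c t f n x)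

/-- The convolution kernel `k(r) = ∫_0^∞ e^{-x r} G(x) dx`. -/
def convKernel {X Y : Type*} [NormedAddCommGroup X] [NormedSpace ℂ X]
    [NormedAddCommGroup Y] [NormedSpace ℂ Y] [CompleteSpace Y]
    (G : ℝ → X →L[ℂ] Y) (r : ℝ) : X →L[ℂ] Y :=
  ∫ x in Set.Ioi (0 : ℝ), Real.exp (-(x * r)) • G x

/-- The exact convolution `u(r) = ∫_0^r k(r - σ)(f(σ)) dσ`. -/
def exactU {X Y : Type*} [NormedAddCommGroup X] [NormedSpace ℂ X]
    [NormedAddCommGroup Y] [NormedSpace ℂ Y] [CompleteSpace Y]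
    (G : ℝ → X →L[ℂ] Y) (f : ℝ → X) (r : ℝ) : Y :=
  ∫ σ in (0 : ℝ)..r, (convKernel G (r - σ)) (f σ)

/-- The solution `y(x, t)` of `∂_t y = -x·y + t^β`, `y(x, 0) = 0`. -/
def ySol (β x t : ℝ) : ℝ :=
  Real.Gamma (β + 1) *
    ∑' k : ℕ, (-x) ^ k * t ^ ((k : ℝ) + β + 1) / Real.Gamma ((k : ℝ) + β + 2)

/-- The `ℓ`-th time derivative of `y(x, ·)`. -/
def yDeriv (β : ℝ) (ℓ : ℕ) (x t : ℝ) : ℝ :=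
  Real.Gamma (β + 1) * t ^ (β - ℓ + 1) *
    ∑' k : ℕ, (-(x * t)) ^ k / Real.Gamma ((k : ℝ) + β - ℓ + 2)

/-- The Runge–Kutta Peano vector `δ^{(ℓ)}`. -/
def deltaVec {s : ℕ} (A : Matrix (Fin s) (Fin s) ℝ) (c : Fin s → ℝ) (ℓ : ℕ) :
    Fin s → ℝ :=
  fun i => (c i ^ ℓ / (ℓ : ℝ) - ∑ j, A i j * c j ^ (ℓ - 1)) / ((ℓ - 1).factorial : ℝ)

/-- The last standard basis vector `e_s` of `ℝ^s`. -/
def esVec (s : ℕ) : Fin s → ℝ := fun i => if (i : ℕ) = s - 1 then 1 else 0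

/-- Descending matrix product `F n * F (n-1) * ⋯ * F (j+1)` (empty product = 1). -/
def prodDesc {s : ℕ} (F : ℕ → Matrix (Fin s) (Fin s) ℝ) (j n : ℕ) :
    Matrix (Fin s) (Fin s) ℝ :=
  (((List.range' (j + 1) (n - j)).reverse).map F).prod

/-- The induced operator norm of a real matrix. -/
def matOpNorm {s : ℕ} (A : Matrix (Fin s) (Fin s) ℝ) : ℝ :=
  ‖LinearMap.toContinuousLinearMap (Matrix.toLin' A)‖

/-- First-step stage defects for data `t^β`. -/
def d1Stage {s : ℕ} (A : Matrix (Fin s) (Fin s) ℝ) (c : Fin s → ℝ)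
    (β τ₁ x : ℝ) : Fin s → ℝ :=
  fun i => ySol β x (c i * τ₁) -
    τ₁ * ∑ j, A i j * (-x * ySol β x (c j * τ₁) + (c j * τ₁) ^ β)

/-- First-step defect for data `t^β`. -/
def d1Step {s : ℕ} (b c : Fin s → ℝ) (β τ₁ x : ℝ) : ℝ :=
  ySol β x τ₁ - τ₁ * ∑ j, b j * (-x * ySol β x (c j * τ₁) + (c j * τ₁) ^ β)

/-- Step defect `d_j(x)` for data `t^β` on a mesh `t`. -/
def djStep {s : ℕ} (b c : Fin s → ℝ) (β : ℝ) (t : ℕ → ℝ) (j : ℕ) (x : ℝ) : ℝ :=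
  ySol β x (t j) - ySol β x (t (j - 1)) - (t j - t (j - 1)) *
    ∑ k, b k * (-x * ySol β x (t (j - 1) + c k * (t j - t (j - 1))) +
      (t (j - 1) + c k * (t j - t (j - 1))) ^ β)

/-- Stage defects `d_{ji}(x)` for data `t^β` on a mesh `t`. -/
def djStage {s : ℕ} (A : Matrix (Fin s) (Fin s) ℝ) (c : Fin s → ℝ)
    (β : ℝ) (t : ℕ → ℝ) (j : ℕ) (x : ℝ) : Fin s → ℝ :=
  fun i => ySol β x (t (j - 1) + c i * (t j - t (j - 1))) - ySol β x (t (j - 1)) -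
    (t j - t (j - 1)) * ∑ k, A i k * (-x * ySol β x (t (j - 1) + c k * (t j - t (j - 1))) +
      (t (j - 1) + c k * (t j - t (j - 1))) ^ β)

/-- The first-interval error component `E_n^1` for data `t^β · v`. -/
def firstIntervalError {X Y : Type*} [NormedAddCommGroup X] [NormedSpace ℂ X]
    [NormedAddCommGroup Y] [NormedSpace ℂ Y] [CompleteSpace Y] {s : ℕ}
    (G : ℝ → X →L[ℂ] Y) (A : Matrix (Fin s) (Fin s) ℝ) (b c : Fin s → ℝ)
    (β : ℝ) (t : ℕ → ℝ) (v : X) (n : ℕ) : Y :=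
  ∫ x in Set.Ioi (0 : ℝ),
    (∏ j ∈ Finset.Icc 2 n, stabR A b (-((t j - t (j - 1)) * x))) •
      (G x) ((d1Step b c β (t 1 - t 0) x -
        (t 1 - t 0) * x * (b ⬝ᵥ (((1 : Matrix (Fin s) (Fin s) ℝ) +
          ((t 1 - t 0) * x) • A)⁻¹ *ᵥ d1Stage A c β (t 1 - t 0) x))) • v)

/-- The accumulated error component `E_n^2` for data `t^β · v`. -/
def accumError {X Y : Type*} [NormedAddCommGroup X] [NormedSpace ℂ X]
    [NormedAddCommGroup Y] [NormedSpace ℂ Y] [CompleteSpace Y] {s : ℕ}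
    (G : ℝ → X →L[ℂ] Y) (A : Matrix (Fin s) (Fin s) ℝ) (b c : Fin s → ℝ)
    (β : ℝ) (t : ℕ → ℝ) (v : X) (n : ℕ) : Y :=
  ∑ j ∈ Finset.Icc 2 n, ∫ x in Set.Ioi (0 : ℝ),
    (∏ l ∈ Finset.Icc (j + 1) n, stabR A b (-((t l - t (l - 1)) * x))) •
      (G x) ((djStep b c β t j x - (t j - t (j - 1)) * x *
        (b ⬝ᵥ (((1 : Matrix (Fin s) (Fin s) ℝ) + ((t j - t (j - 1)) * x) • A)⁻¹ *ᵥ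
          djStage A c β t j x))) • v)

/-- The matrix `m^{(n,j)}(x)` inside the gCQ weights. -/
def wMat {s : ℕ} (A : Matrix (Fin s) (Fin s) ℝ) (t : ℕ → ℝ) (n j : ℕ) (x : ℝ) :
    Matrix (Fin s) (Fin s) ℝ :=
  prodDesc (fun l => vecMulVec
      ((((1 : Matrix (Fin s) (Fin s) ℝ) + ((t l - t (l - 1)) * x) • A)⁻¹) *ᵥ
        (fun _ => (1 : ℝ)))
      (esVec s)) j n *
    A * (((1 : Matrix (Fin s) (Fin s) ℝ) + ((t j - t (j - 1)) * x) • A)⁻¹)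

/-- The `(i,k)` entry of the gCQ weight operator `W_{n,j}`. -/
def gcqWeightEntry {X Y : Type*} [NormedAddCommGroup X] [NormedSpace ℂ X]
    [NormedAddCommGroup Y] [NormedSpace ℂ Y] [CompleteSpace Y] {s : ℕ}
    (G : ℝ → X →L[ℂ] Y) (A : Matrix (Fin s) (Fin s) ℝ)
    (t : ℕ → ℝ) (n j : ℕ) (i k : Fin s) : X →L[ℂ] Y :=
  (t j - t (j - 1)) • ∫ x in Set.Ioi (0 : ℝ), wMat A t n j x i k • G x

namespace MatstabAux


variable {s : ℕ}

lemma eval_charpoly (M : Matrix (Fin s) (Fin s) ℂ) (z : ℂ) :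
    M.charpoly.eval z = (z • (1 : Matrix (Fin s) (Fin s) ℂ) - M).det := by
  rw [Matrix.charpoly, ← Polynomial.coe_evalRingHom, RingHom.map_det]
  congr 1
  ext i j
  by_cases h : i = j <;>
    simp [Matrix.charmatrix_apply, Matrix.diagonal_apply, h, Matrix.one_apply,
      Matrix.smul_apply, Matrix.sub_apply, Matrix.map_apply]

lemma cast_dot (b v : Fin s → ℝ) (M : Matrix (Fin s) (Fin s) ℝ) :
    ((b ⬝ᵥ (M *ᵥ v) : ℝ) : ℂ) =
      (fun i => (b i : ℂ)) ⬝ᵥ ((M.map ((↑) : ℝ → ℂ)) *ᵥ fun i => (v i : ℂ)) := by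
  simp only [dotProduct, Matrix.mulVec, Matrix.map_apply]
  push_cast
  ring

lemma map_pow' (M : Matrix (Fin s) (Fin s) ℝ) (k : ℕ) :
    (M ^ k).map ((↑) : ℝ → ℂ) = (M.map ((↑) : ℝ → ℂ)) ^ k := by
  have := map_pow (Complex.ofRealHom.mapMatrix (m := Fin s)) M k
  exact this

lemma map_mul' (M N : Matrix (Fin s) (Fin s) ℝ) :
    (M * N).map ((↑) : ℝ → ℂ) = M.map ((↑) : ℝ → ℂ) * N.map ((↑) : ℝ → ℂ) :=
  Matrix.map_mul (f := Complex.ofRealHom)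

lemma map_det' (M : Matrix (Fin s) (Fin s) ℝ) :
    ((M.det : ℝ) : ℂ) = (M.map ((↑) : ℝ → ℂ)).det :=
  RingHom.map_det Complex.ofRealHom M

lemma abs_diag_dot (α β w : Fin s → ℂ) (K : Fin s → ℝ)
    (hw : ∀ j, ‖w j‖ ≤ K j) :
    ‖∑ j, α j * (w j * β j)‖ ≤
      ∑ j, ‖α j‖ * K j * ‖β j‖ := by
  refine (norm_sum_le _ _).trans ?_
  apply Finset.sum_le_sum
  intro j _
  calc ‖α j * (w j * β j)‖
      = ‖α j‖ * (‖w j‖ * ‖β j‖) := by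
        rw [norm_mul, norm_mul]
    _ ≤ ‖α j‖ * (K j * ‖β j‖) := by
        gcongr
        exact hw j
    _ = ‖α j‖ * K j * ‖β j‖ := by ring

lemma inv_conj (P B : Matrix (Fin s) (Fin s) ℂ) (hP : IsUnit P.det) :
    (P * B * P⁻¹)⁻¹ = P * B⁻¹ * P⁻¹ := by
  rw [Matrix.mul_inv_rev, Matrix.mul_inv_rev, Matrix.nonsing_inv_nonsing_inv P hP,
    Matrix.mul_assoc]

lemma inv_diag' (v : Fin s → ℂ) (hv : ∀ j, v j ≠ 0) :
    (Matrix.diagonal v)⁻¹ = Matrix.diagonal (fun j => (v j)⁻¹) := by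
  apply Matrix.inv_eq_right_inv
  rw [Matrix.diagonal_mul_diagonal]
  have h : (fun i => v i * (v i)⁻¹) = fun _ => (1 : ℂ) :=
    funext fun j => mul_inv_cancel₀ (hv j)
  rw [h, Matrix.diagonal_one]

lemma dot_sum (u : Fin s → ℂ) (f : ℕ → Fin s → ℂ) (t : Finset ℕ) :
    u ⬝ᵥ (∑ i ∈ t, f i) = ∑ i ∈ t, u ⬝ᵥ f i := by
  simp only [dotProduct, Finset.sum_apply, Finset.mul_sum]
  rw [Finset.sum_comm]

lemma sum_mulVec (f : ℕ → Matrix (Fin s) (Fin s) ℂ) (t : Finset ℕ) (v : Fin s → ℂ) :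
    (∑ i ∈ t, f i) *ᵥ v = ∑ i ∈ t, f i *ᵥ v := by
  funext k
  simp only [Matrix.mulVec, dotProduct, Finset.sum_apply, Matrix.sum_apply,
    Finset.sum_mul]
  rw [Finset.sum_comm]

end MatstabAux

theorem matstab_estimate {s : ℕ} (hs : 0 < s)
    (A : Matrix (Fin s) (Fin s) ℝ) (b c : Fin s → ℝ)
    (hA_inv : IsUnit A.det)
    (hA_diag : ∃ P D : Matrix (Fin s) (Fin s) ℂ, IsUnit P.det ∧ D.IsDiag ∧
      A.map ((↑) : ℝ → ℂ) = P * D * P⁻¹)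
    (hA_eig : ∀ z : ℂ, (A.map ((↑) : ℝ → ℂ)).charpoly.IsRoot z → 0 < z.re)
    (hstiff : ∀ i, b i = A ⟨s - 1, Nat.sub_lt hs Nat.one_pos⟩ i)
    (p q ℓ : ℕ)
    (hbpow : ∀ m l : ℕ, 1 ≤ l → m + 1 + l ≤ p →
      b ⬝ᵥ ((A ^ (m + 1)) *ᵥ (fun i => c i ^ (l - 1))) =
        (1 / (l : ℝ)) * (b ⬝ᵥ ((A ^ m) *ᵥ (fun i => c i ^ l))))
    (hq : q < p) (hℓ1 : q + 1 ≤ ℓ) (hℓ2 : ℓ ≤ p) :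
    ∃ C : ℝ, 0 < C ∧
      (∀ τ x : ℝ, 0 < τ → 0 < x → x < (τ * matOpNorm A)⁻¹ →
        |τ * x * (b ⬝ᵥ (((1 : Matrix (Fin s) (Fin s) ℝ) + (τ * x) • A)⁻¹ *ᵥ
          deltaVec A c ℓ))| ≤ C * (τ * x) ^ (p - ℓ + 1)) ∧
      (∀ τ x : ℝ, 0 < τ → 0 < x →
        |τ * x * (b ⬝ᵥ (((1 : Matrix (Fin s) (Fin s) ℝ) + (τ * x) • A)⁻¹ *ᵥ
          deltaVec A c ℓ))| ≤ C) := by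
  obtain ⟨P, D, hP, hDdiag, hPDP⟩ := hA_diag
  set Aℂ : Matrix (Fin s) (Fin s) ℂ := A.map ((↑) : ℝ → ℂ) with hAℂ
  set d : Fin s → ℂ := fun i => D i i with hddef
  have hD : Matrix.diagonal d = D := hDdiag.diagonal_diag
  have hPinv : P * P⁻¹ = 1 := Matrix.mul_nonsing_inv P hP
  have hPinv' : P⁻¹ * P = 1 := Matrix.nonsing_inv_mul P hP
  have hPne : P.det ≠ 0 := hP.ne_zero
  -- eigenvalues have positive real part
  have hdre : ∀ j, 0 < (d j).re := by
    intro j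
    apply hA_eig
    rw [Polynomial.IsRoot, MatstabAux.eval_charpoly, hPDP]
    have h1 : P * ((d j) • (1 : Matrix (Fin s) (Fin s) ℂ) - D) * P⁻¹
        = (d j) • (1 : Matrix (Fin s) (Fin s) ℂ) - P * D * P⁻¹ := by
      rw [Matrix.mul_sub, Matrix.sub_mul, Matrix.mul_smul, Matrix.smul_mul,
        Matrix.mul_one, hPinv]
    rw [← h1, Matrix.det_mul, Matrix.det_mul]
    have h2 : ((d j) • (1 : Matrix (Fin s) (Fin s) ℂ) - D).det = 0 := by
      rw [← hD, Matrix.smul_one_eq_diagonal, Matrix.diagonal_sub, Matrix.det_diagonal]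
      exact Finset.prod_eq_zero (Finset.mem_univ j) (by simp)
    rw [h2, mul_zero, zero_mul]
  have h1ℓ : 1 ≤ ℓ := le_trans (Nat.le_add_left 1 q) hℓ1
  set δ : Fin s → ℝ := deltaVec A c ℓ with hδdef
  set δℂ : Fin s → ℂ := fun i => (δ i : ℂ) with hδℂdef
  set bℂ : Fin s → ℂ := fun i => (b i : ℂ) with hbℂdef
  -- vanishing moments
  have hmom : ∀ m : ℕ, m + 1 + ℓ ≤ p → b ⬝ᵥ ((A ^ m) *ᵥ δ) = 0 := by
    intro m hm
    have hb := hbpow m ℓ h1ℓ hm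
    have hδ : δ = (((ℓ - 1).factorial : ℝ))⁻¹ •
        ((ℓ : ℝ)⁻¹ • (fun i => c i ^ ℓ) - A *ᵥ (fun i => c i ^ (ℓ - 1))) := by
      funext i
      simp only [hδdef, deltaVec, Pi.smul_apply, Pi.sub_apply, Matrix.mulVec,
        dotProduct, smul_eq_mul]
      ring
    rw [hδ, Matrix.mulVec_smul, dotProduct_smul, smul_eq_mul,
      Matrix.mulVec_sub, dotProduct_sub, Matrix.mulVec_smul,
      dotProduct_smul, smul_eq_mul, Matrix.mulVec_mulVec, ← pow_succ, hb]
    ring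
  have hmomℂ : ∀ k : ℕ, k < p - ℓ → bℂ ⬝ᵥ ((Aℂ ^ k) *ᵥ δℂ) = 0 := by
    intro k hk
    have h0 := hmom k (by omega)
    have h1 := MatstabAux.cast_dot b δ (A ^ k)
    rw [h0, MatstabAux.map_pow'] at h1
    simpa [hbℂdef, hδℂdef] using h1.symm
  -- fixed constants
  set β : Fin s → ℂ := P⁻¹ *ᵥ δℂ with hβdef
  set α₀ : Fin s → ℂ := Matrix.vecMul bℂ P with hα₀def
  set α₁ : Fin s → ℂ := Matrix.vecMul (Matrix.vecMul bℂ (Aℂ ^ (p - ℓ))) P with hα₁def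
  set C₀ : ℝ := ∑ j, ‖α₀ j‖ * ((d j).re)⁻¹ * ‖β j‖ with hC₀def
  set C₁ : ℝ := ∑ j, ‖α₁ j‖ * 1 * ‖β j‖ with hC₁def
  have hC₀0 : 0 ≤ C₀ := Finset.sum_nonneg fun j _ =>
    mul_nonneg (mul_nonneg (norm_nonneg _) (inv_nonneg.2 (hdre j).le))
      (norm_nonneg _)
  have hC₁0 : 0 ≤ C₁ := Finset.sum_nonneg fun j _ =>
    mul_nonneg (mul_nonneg (norm_nonneg _) zero_le_one) (norm_nonneg _)
  have key : ∀ r : ℝ, 0 < r →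
      |r * (b ⬝ᵥ (((1 : Matrix (Fin s) (Fin s) ℝ) + r • A)⁻¹ *ᵥ δ))| ≤ C₁ * r ^ (p - ℓ + 1) ∧
      |r * (b ⬝ᵥ (((1 : Matrix (Fin s) (Fin s) ℝ) + r • A)⁻¹ *ᵥ δ))| ≤ C₀ := by
    intro r hr
    have hw0 : ∀ j, (1 + (r : ℂ) * d j) ≠ 0 := by
      intro j h
      have h2 : (1 + (r : ℂ) * d j).re = 0 := by rw [h]; simp
      simp only [Complex.add_re, Complex.one_re, Complex.mul_re, Complex.ofReal_re,
        Complex.ofReal_im, zero_mul, sub_zero] at h2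
      nlinarith [hdre j]
    set w : Fin s → ℂ := fun j => (1 + (r : ℂ) * d j)⁻¹ with hwdef
    -- factorization of 1 + r A over ℂ
    have hfact : (1 : Matrix (Fin s) (Fin s) ℂ) + (r : ℂ) • Aℂ
        = P * Matrix.diagonal (fun j => 1 + (r : ℂ) * d j) * P⁻¹ := by
      have hmid : Matrix.diagonal (fun j => 1 + (r : ℂ) * d j)
          = 1 + (r : ℂ) • D := by
        ext i j
        by_cases h : i = j
        · subst h
          simp [Matrix.diagonal_apply_eq, Matrix.one_apply_eq, hddef]
        · simp [Matrix.diagonal_apply_ne _ h, Matrix.one_apply_ne h, hDdiag h]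
      rw [hmid, Matrix.mul_add, Matrix.mul_one, Matrix.add_mul, hPinv,
        Matrix.mul_smul, Matrix.smul_mul, ← hPDP]
    have hdetXℂ : IsUnit ((1 : Matrix (Fin s) (Fin s) ℂ) + (r : ℂ) • Aℂ).det := by
      rw [hfact, Matrix.det_mul, Matrix.det_mul]
      refine isUnit_iff_ne_zero.2 (mul_ne_zero (mul_ne_zero hPne ?_) ?_)
      · rw [Matrix.det_diagonal]
        exact Finset.prod_ne_zero_iff.2 fun j _ => hw0 j
      · rw [Matrix.det_nonsing_inv]
        simp only [Ring.inverse_eq_inv']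
        exact inv_ne_zero hPne
    have hmapX : ((1 : Matrix (Fin s) (Fin s) ℝ) + r • A).map ((↑) : ℝ → ℂ)
        = (1 : Matrix (Fin s) (Fin s) ℂ) + (r : ℂ) • Aℂ := by
      ext i j
      by_cases h : i = j
      · subst h
        simp [Matrix.map_apply, Matrix.one_apply_eq, hAℂ]
      · simp [Matrix.map_apply, Matrix.one_apply_ne h, hAℂ]
    have hdetXℝ : IsUnit ((1 : Matrix (Fin s) (Fin s) ℝ) + r • A).det := by
      refine isUnit_iff_ne_zero.2 fun h => hdetXℂ.ne_zero ?_
      rw [← hmapX, ← MatstabAux.map_det', h, Complex.ofReal_zero]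
    have hinvmap : (((1 : Matrix (Fin s) (Fin s) ℝ) + r • A)⁻¹).map ((↑) : ℝ → ℂ)
        = ((1 : Matrix (Fin s) (Fin s) ℂ) + (r : ℂ) • Aℂ)⁻¹ := by
      symm
      apply Matrix.inv_eq_right_inv
      rw [← hmapX, ← MatstabAux.map_mul', Matrix.mul_nonsing_inv _ hdetXℝ]
      exact Matrix.map_one _ Complex.ofReal_zero Complex.ofReal_one
    have hXinvℂ : ((1 : Matrix (Fin s) (Fin s) ℂ) + (r : ℂ) • Aℂ)⁻¹
        = P * Matrix.diagonal w * P⁻¹ := by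
      rw [hfact, MatstabAux.inv_conj P _ hP, MatstabAux.inv_diag' _ hw0]
    -- complex form of the scalar
    set g : ℝ := r * (b ⬝ᵥ (((1 : Matrix (Fin s) (Fin s) ℝ) + r • A)⁻¹ *ᵥ δ)) with hgdef
    have hgℂ : (g : ℂ) = (r : ℂ) *
        (bℂ ⬝ᵥ (((1 : Matrix (Fin s) (Fin s) ℂ) + (r : ℂ) • Aℂ)⁻¹ *ᵥ δℂ)) := by
      rw [hgdef, Complex.ofReal_mul, MatstabAux.cast_dot, hinvmap]
    -- geometric splitting
    set xM : Matrix (Fin s) (Fin s) ℂ := (-(r : ℂ)) • Aℂ with hxMdef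
    have hXeq : (1 : Matrix (Fin s) (Fin s) ℂ) + (r : ℂ) • Aℂ = 1 - xM := by
      rw [hxMdef, neg_smul, sub_neg_eq_add]
    have hS : (∑ i ∈ Finset.range (p - ℓ), xM ^ i) *
        ((1 : Matrix (Fin s) (Fin s) ℂ) + (r : ℂ) • Aℂ) = 1 - xM ^ (p - ℓ) := by
      rw [hXeq]
      have h1 : (1 : Matrix (Fin s) (Fin s) ℂ) - xM = -(xM - 1) := (neg_sub xM 1).symm
      rw [h1, mul_neg, geom_sum_mul, neg_sub]
    have hSolve : ((1 : Matrix (Fin s) (Fin s) ℂ) + (r : ℂ) • Aℂ)⁻¹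
        = (∑ i ∈ Finset.range (p - ℓ), xM ^ i) +
          xM ^ (p - ℓ) * ((1 : Matrix (Fin s) (Fin s) ℂ) + (r : ℂ) • Aℂ)⁻¹ := by
      have h3 : (∑ i ∈ Finset.range (p - ℓ), xM ^ i)
          = (1 - xM ^ (p - ℓ)) * ((1 : Matrix (Fin s) (Fin s) ℂ) + (r : ℂ) • Aℂ)⁻¹ := by
        rw [← hS, Matrix.mul_assoc, Matrix.mul_nonsing_inv _ hdetXℂ, Matrix.mul_one]
      rw [h3, Matrix.sub_mul, Matrix.one_mul, sub_add_cancel]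
    have hsplit : bℂ ⬝ᵥ (((1 : Matrix (Fin s) (Fin s) ℂ) + (r : ℂ) • Aℂ)⁻¹ *ᵥ δℂ)
        = (-(r : ℂ)) ^ (p - ℓ) *
          (bℂ ⬝ᵥ ((Aℂ ^ (p - ℓ) * ((1 : Matrix (Fin s) (Fin s) ℂ) + (r : ℂ) • Aℂ)⁻¹) *ᵥ δℂ)) := by
      conv_lhs => rw [hSolve]
      rw [Matrix.add_mulVec, dotProduct_add, MatstabAux.sum_mulVec]
      have hzero : bℂ ⬝ᵥ (∑ i ∈ Finset.range (p - ℓ), xM ^ i *ᵥ δℂ) = 0 := by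
        rw [MatstabAux.dot_sum]
        refine Finset.sum_eq_zero fun k hk => ?_
        rw [hxMdef, smul_pow, Matrix.smul_mulVec, dotProduct_smul,
          hmomℂ k (Finset.mem_range.1 hk), smul_zero]
      rw [hzero, zero_add, hxMdef, smul_pow, Matrix.smul_mul,
        Matrix.smul_mulVec, dotProduct_smul, smul_eq_mul]
    -- diagonal dot form
    have hform : ∀ u : Fin s → ℂ, u ⬝ᵥ ((P * Matrix.diagonal w * P⁻¹) *ᵥ δℂ)
        = ∑ j, (Matrix.vecMul u P) j * (w j * β j) := by
      intro u
      rw [← Matrix.mulVec_mulVec, ← Matrix.mulVec_mulVec, dotProduct_mulVec]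
      simp only [dotProduct, Matrix.mulVec_diagonal, hβdef]
    -- bounds on w
    have habs1 : ∀ j, ‖w j‖ ≤ 1 := by
      intro j
      rw [hwdef]
      simp only [norm_inv]
      refine inv_le_one_of_one_le₀ ?_
      refine le_trans ?_ (le_trans (le_abs_self _) (Complex.abs_re_le_norm _))
      simp only [Complex.add_re, Complex.one_re, Complex.mul_re, Complex.ofReal_re,
        Complex.ofReal_im, zero_mul, sub_zero]
      nlinarith [hdre j]
    have habsr : ∀ j, ‖(r : ℂ) * w j‖ ≤ ((d j).re)⁻¹ := by
      intro j
      rw [hwdef, norm_mul, norm_inv, Complex.norm_real, Real.norm_eq_abs, abs_of_pos hr]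
      have h4 : 0 < r * (d j).re := mul_pos hr (hdre j)
      have h5 : r * (d j).re ≤ ‖1 + (r : ℂ) * d j‖ := by
        refine le_trans ?_ (le_trans (le_abs_self _) (Complex.abs_re_le_norm _))
        simp only [Complex.add_re, Complex.one_re, Complex.mul_re, Complex.ofReal_re,
          Complex.ofReal_im, zero_mul, sub_zero]
        nlinarith [hdre j]
      have h6 : (‖1 + (r : ℂ) * d j‖)⁻¹ ≤ (r * (d j).re)⁻¹ :=
        inv_anti₀ h4 h5
      calc r * (‖1 + (r : ℂ) * d j‖)⁻¹
          ≤ r * (r * (d j).re)⁻¹ := mul_le_mul_of_nonneg_left h6 hr.le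
        _ = ((d j).re)⁻¹ := by
            rw [mul_inv, ← mul_assoc, mul_inv_cancel₀ hr.ne', one_mul]
    -- bound 2 (uniform)
    have hbound0 : |g| ≤ C₀ := by
      have he : (g : ℂ) = ∑ j, α₀ j * (((r : ℂ) * w j) * β j) := by
        rw [hgℂ, hXinvℂ, hform bℂ, Finset.mul_sum]
        exact Finset.sum_congr rfl fun j _ => by ring
      have := MatstabAux.abs_diag_dot α₀ β (fun j => (r : ℂ) * w j)
        (fun j => ((d j).re)⁻¹) habsr
      rw [← he] at this
      rwa [Complex.norm_real, Real.norm_eq_abs] at this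
    -- bound 1 (power)
    have hbound1 : |g| ≤ C₁ * r ^ (p - ℓ + 1) := by
      have he : (g : ℂ) = ((r : ℂ) * (-(r : ℂ)) ^ (p - ℓ)) *
          ∑ j, α₁ j * (w j * β j) := by
        rw [hgℂ, hsplit, hXinvℂ, ← Matrix.mulVec_mulVec, dotProduct_mulVec,
          hform, ← hα₁def]
        ring
      have habs := MatstabAux.abs_diag_dot α₁ β w (fun _ => 1) habs1
      rw [← hC₁def] at habs
      have habsc : ‖(r : ℂ) * (-(r : ℂ)) ^ (p - ℓ)‖ = r ^ (p - ℓ + 1) := by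
        rw [norm_mul, norm_pow]
        have h7 : ‖-(r : ℂ)‖ = r := by
          rw [norm_neg, Complex.norm_real, Real.norm_eq_abs, abs_of_pos hr]
        rw [h7, Complex.norm_real, Real.norm_eq_abs, abs_of_pos hr, pow_succ]
        ring
      calc |g| = ‖(g : ℂ)‖ := by rw [Complex.norm_real, Real.norm_eq_abs]
        _ = ‖(r : ℂ) * (-(r : ℂ)) ^ (p - ℓ)‖ *
            ‖∑ j, α₁ j * (w j * β j)‖ := by rw [he, norm_mul]
        _ ≤ r ^ (p - ℓ + 1) * C₁ := by
            rw [habsc]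
            exact mul_le_mul_of_nonneg_left habs (by positivity)
        _ = C₁ * r ^ (p - ℓ + 1) := by ring
    exact ⟨hbound1, hbound0⟩
  refine ⟨max C₀ C₁ + 1, by positivity, ?_, ?_⟩
  · intro τ x hτ hx _
    have h := (key (τ * x) (mul_pos hτ hx)).1
    refine h.trans ?_
    have hle : C₁ ≤ max C₀ C₁ + 1 := (le_max_right C₀ C₁).trans (by linarith)
    have hpw : (0:ℝ) ≤ (τ * x) ^ (p - ℓ + 1) := by positivity
    exact mul_le_mul_of_nonneg_right hle hpw
  · intro τ x hτ hx
    exact ((key (τ * x) (mul_pos hτ hx)).2).trans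
      ((le_max_left C₀ C₁).trans (by linarith))

end
end

section
/- Let T > 0, γ ≥ 1, m > 0 and ν ∈ ℝ. Then there exists a constant C > 0, depending only on γ, m, ν and T but not on N, n or the choice of points, such that for every integer N ≥ 2, the graded mesh t_j = (jτ)^γ with τ = T^{1/γ}/N, every 2 ≤ n ≤ N and every choice of σ_j ∈ [t_{j−1}, t_j]: if γν < m − 1 then Σ_{j=2}^n τ_j^m·σ_j^{ν−m} ≤ C·N^{−γν}; if γν = m − 1 then Σ_{j=2}^n τ_j^m·σ_j^{ν−m} ≤ C·N^{−(m−1)}·log(n); and if γν > m − 1 then Σ_{j=2}^n τ_j^m·σ_j^{ν−m} ≤ C·N^{−(m−1)}·t_n^{ν−(m−1)/γ}, where τ_j = t_j − t_{j−1}. -/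
open MeasureTheory Matrix

noncomputable section

private lemma rpow_mvt (p : ℝ) {a b : ℝ} (ha : 0 < a) (hab : a < b) :
    ∃ ξ, a < ξ ∧ ξ < b ∧ b ^ p - a ^ p = p * ξ ^ (p - 1) * (b - a) := by
  obtain ⟨ξ, hξ, h⟩ := exists_hasDerivAt_eq_slope (fun x => x ^ p) (fun x => p * x ^ (p - 1)) hab
    (fun x hx => (Real.continuousAt_rpow_const x p
      (Or.inl (ha.trans_le hx.1).ne')).continuousWithinAt)
    (fun x hx => Real.hasDerivAt_rpow_const (Or.inl (ha.trans hx.1).ne'))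
  refine ⟨ξ, hξ.1, hξ.2, ?_⟩
  rw [eq_div_iff (sub_ne_zero.2 hab.ne')] at h
  linarith [h]

private lemma sum_le_tel {g h : ℕ → ℝ} :
    ∀ n, 1 ≤ n → (∀ j, 2 ≤ j → j ≤ n → g j ≤ h j - h (j - 1)) →
    ∑ j ∈ Finset.Icc 2 n, g j ≤ h n - h 1
  | 0, hn, _ => by omega
  | 1, _, _ => by simp
  | (n+2), _, H => by
    have hins : Finset.Icc 2 (n+2) = insert (n+2) (Finset.Icc 2 (n+1)) := by
      ext x; simp only [Finset.mem_Icc, Finset.mem_insert]; omega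
    rw [hins, Finset.sum_insert (by simp)]
    have ih := sum_le_tel (n+1) (by omega) (fun j hj hjn => H j hj (by omega))
    have hlast := H (n+2) (by omega) le_rfl
    have h2 : (n + 2) - 1 = n + 1 := rfl
    rw [h2] at hlast
    linarith

private lemma cast_pred_eq {j : ℕ} (hj : 2 ≤ j) : ((j - 1 : ℕ) : ℝ) = (j : ℝ) - 1 := by
  have : 1 ≤ j := by omega
  push_cast [Nat.cast_sub this]
  ring

private lemma sum_rpow_le_of_lt_neg_one {e : ℝ} (he : e < -1) (n : ℕ) (hn : 1 ≤ n) :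
    ∑ j ∈ Finset.Icc 2 n, (j : ℝ) ^ e ≤ 1 / (-(e + 1)) := by
  have h1 : (0:ℝ) < -(e + 1) := by linarith
  set c : ℝ := (-(e + 1))⁻¹ with hc_def
  have hcpos : 0 < c := inv_pos.mpr h1
  have hc : -(e + 1) * c = 1 := mul_inv_cancel₀ h1.ne'
  have key := sum_le_tel (g := fun j => (j:ℝ) ^ e)
    (h := fun j => (1 - (j:ℝ) ^ (e + 1)) * c) n hn ?_
  · have hn1 : (0:ℝ) ≤ (n:ℝ) ^ (e+1) := Real.rpow_nonneg (Nat.cast_nonneg n) _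
    simp only [Nat.cast_one, Real.one_rpow] at key
    have h2 : (1 - (n:ℝ) ^ (e+1)) * c - (1 - 1) * c ≤ 1 * c := by
      nlinarith
    rw [one_div]
    linarith
  · intro j hj2 hjn
    have hjc : (2:ℝ) ≤ (j:ℝ) := by exact_mod_cast hj2
    have hjm1 : (0:ℝ) < (j:ℝ) - 1 := by linarith
    obtain ⟨ξ, hξ1, hξ2, hξeq⟩ := rpow_mvt (e+1) hjm1 (by linarith : (j:ℝ) - 1 < j)
    have hξpos : 0 < ξ := hjm1.trans hξ1
    rw [cast_pred_eq hj2]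
    rw [show (j:ℝ) - ((j:ℝ) - 1) = 1 by ring, mul_one, show e + 1 - 1 = e by ring] at hξeq
    have hR : (1 - (j:ℝ) ^ (e+1)) * c - (1 - ((j:ℝ)-1) ^ (e+1)) * c = ξ ^ e := by
      have h3 : (1 - (j:ℝ) ^ (e+1)) * c - (1 - ((j:ℝ)-1) ^ (e+1)) * c
          = -((j:ℝ) ^ (e+1) - ((j:ℝ)-1) ^ (e+1)) * c := by ring
      rw [h3, hξeq]
      calc -((e+1) * ξ ^ e) * c = ξ ^ e * (-(e+1) * c) := by ring
        _ = ξ ^ e := by rw [hc, mul_one]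
    rw [hR]
    exact Real.rpow_le_rpow_of_nonpos hξpos hξ2.le (by linarith)

private lemma sum_inv_le_log (n : ℕ) (hn : 1 ≤ n) :
    ∑ j ∈ Finset.Icc 2 n, (j : ℝ) ^ (-1 : ℝ) ≤ Real.log n := by
  have key := sum_le_tel (g := fun j => (j:ℝ) ^ (-1:ℝ))
    (h := fun j => Real.log (j:ℝ)) n hn ?_
  · simpa using key
  · intro j hj2 hjn
    have hjc : (2:ℝ) ≤ (j:ℝ) := by exact_mod_cast hj2
    have hjm1 : (0:ℝ) < (j:ℝ) - 1 := by linarith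
    have hjpos : (0:ℝ) < (j:ℝ) := by linarith
    rw [cast_pred_eq hj2]
    have h1 : Real.log (((j:ℝ)-1) / (j:ℝ)) ≤ ((j:ℝ)-1)/(j:ℝ) - 1 :=
      Real.log_le_sub_one_of_pos (by positivity)
    rw [Real.log_div hjm1.ne' hjpos.ne'] at h1
    have h2 : ((j:ℝ)-1)/(j:ℝ) - 1 = -(1/(j:ℝ)) := by field_simp; ring
    rw [Real.rpow_neg_one]
    have h3 : (j:ℝ)⁻¹ = 1/(j:ℝ) := by field_simp
    rw [h3]
    linarith

private lemma sum_rpow_le_of_neg_one_lt {e : ℝ} (he : -1 < e) (n : ℕ) (hn : 1 ≤ n) :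
    ∑ j ∈ Finset.Icc 2 n, (j : ℝ) ^ e ≤ 2 ^ |e| / (e + 1) * (n:ℝ) ^ (e + 1) := by
  have h1 : (0:ℝ) < e + 1 := by linarith
  have h2pos : (0:ℝ) < 2 ^ |e| := Real.rpow_pos_of_pos two_pos _
  have key := sum_le_tel (g := fun j => (j:ℝ) ^ e)
    (h := fun j => 2 ^ |e| / (e+1) * (j:ℝ) ^ (e+1)) n hn ?_
  · have : (0:ℝ) ≤ 2 ^ |e| / (e+1) * (1:ℝ) ^ (e+1) := by positivity
    simp only [Nat.cast_one] at key
    linarith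
  · intro j hj2 hjn
    have hjc : (2:ℝ) ≤ (j:ℝ) := by exact_mod_cast hj2
    have hjm1 : (0:ℝ) < (j:ℝ) - 1 := by linarith
    have hjpos : (0:ℝ) < (j:ℝ) := by linarith
    obtain ⟨ξ, hξ1, hξ2, hξeq⟩ := rpow_mvt (e+1) hjm1 (by linarith : (j:ℝ) - 1 < j)
    have hξpos : 0 < ξ := hjm1.trans hξ1
    rw [cast_pred_eq hj2]
    have heq : 2 ^ |e| / (e+1) * (j:ℝ) ^ (e+1) - 2 ^ |e| / (e+1) * ((j:ℝ)-1) ^ (e+1)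
        = 2 ^ |e| / (e+1) * ((j:ℝ) ^ (e+1) - ((j:ℝ)-1) ^ (e+1)) := by ring
    rw [heq, hξeq, show (j:ℝ) - ((j:ℝ) - 1) = 1 by ring, mul_one,
      show e + 1 - 1 = e by ring]
    have hgoal : 2 ^ |e| / (e+1) * ((e+1) * ξ ^ e) = 2 ^ |e| * ξ ^ e := by
      field_simp
    rw [hgoal]
    -- j^e ≤ 2^|e| * ξ^e
    rcases le_or_gt 0 e with hce | hce
    · rw [abs_of_nonneg hce]
      have hj2ξ : (j:ℝ) ≤ 2 * ξ := by linarith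
      calc (j:ℝ) ^ e ≤ (2 * ξ) ^ e := Real.rpow_le_rpow hjpos.le hj2ξ hce
        _ = 2 ^ e * ξ ^ e := Real.mul_rpow (by norm_num) hξpos.le
    · have : (j:ℝ) ^ e ≤ ξ ^ e := Real.rpow_le_rpow_of_nonpos hξpos hξ2.le hce.le
      have h2one : (1:ℝ) ≤ 2 ^ |e| := Real.one_le_rpow one_le_two (abs_nonneg e)
      nlinarith [Real.rpow_nonneg hξpos.le e]

private lemma graded_term_bound {γ m ν τ : ℝ} (hγ : 1 ≤ γ) (hm : 0 < m) (hτ : 0 < τ)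
    {j : ℕ} (hj : 2 ≤ j) {σ : ℝ}
    (hσl : ((j:ℝ) - 1) ^ γ * τ ^ γ ≤ σ) (hσu : σ ≤ (j:ℝ) ^ γ * τ ^ γ) :
    ((j:ℝ) ^ γ * τ ^ γ - ((j:ℝ) - 1) ^ γ * τ ^ γ) ^ m * σ ^ (ν - m) ≤
      2 ^ (γ * |ν - m|) * γ ^ m * (τ ^ γ) ^ ν * (j:ℝ) ^ (γ * ν - m) := by
  have hγ0 : (0:ℝ) < γ := by linarith
  have hjc : (2:ℝ) ≤ (j:ℝ) := by exact_mod_cast hj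
  have hjm1pos : (0:ℝ) < (j:ℝ) - 1 := by linarith
  have hjpos : (0:ℝ) < (j:ℝ) := by linarith
  have hτγ : (0:ℝ) < τ ^ γ := Real.rpow_pos_of_pos hτ γ
  obtain ⟨ξ, hξ1, hξ2, hξeq⟩ := rpow_mvt γ hjm1pos (by linarith : (j:ℝ) - 1 < j)
  have hξpos : 0 < ξ := hjm1pos.trans hξ1
  rw [show (j:ℝ) - ((j:ℝ) - 1) = 1 by ring, mul_one] at hξeq
  have hdiff_le : (j:ℝ) ^ γ - ((j:ℝ) - 1) ^ γ ≤ γ * (j:ℝ) ^ (γ - 1) := by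
    rw [hξeq]
    have h1 : ξ ^ (γ - 1) ≤ (j:ℝ) ^ (γ - 1) :=
      Real.rpow_le_rpow hξpos.le hξ2.le (by linarith)
    nlinarith
  have hdiff_nonneg : 0 ≤ (j:ℝ) ^ γ - ((j:ℝ) - 1) ^ γ :=
    sub_nonneg.2 (Real.rpow_le_rpow hjm1pos.le (by linarith) hγ0.le)
  have hfac : (j:ℝ) ^ γ * τ ^ γ - ((j:ℝ) - 1) ^ γ * τ ^ γ
      = ((j:ℝ) ^ γ - ((j:ℝ) - 1) ^ γ) * τ ^ γ := by ring
  have hstep : ((j:ℝ) ^ γ * τ ^ γ - ((j:ℝ) - 1) ^ γ * τ ^ γ) ^ m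
      ≤ γ ^ m * (j:ℝ) ^ ((γ - 1) * m) * (τ ^ γ) ^ m := by
    rw [hfac]
    have h1 : ((j:ℝ) ^ γ - ((j:ℝ) - 1) ^ γ) * τ ^ γ ≤ γ * (j:ℝ) ^ (γ - 1) * τ ^ γ :=
      mul_le_mul_of_nonneg_right hdiff_le hτγ.le
    refine (Real.rpow_le_rpow (mul_nonneg hdiff_nonneg hτγ.le) h1 hm.le).trans_eq ?_
    rw [Real.mul_rpow (mul_nonneg hγ0.le (Real.rpow_nonneg hjpos.le _)) hτγ.le,
      Real.mul_rpow hγ0.le (Real.rpow_nonneg hjpos.le _),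
      ← Real.rpow_mul hjpos.le]
  have hσpos : 0 < σ :=
    lt_of_lt_of_le (mul_pos (Real.rpow_pos_of_pos hjm1pos γ) hτγ) hσl
  have hσbound : σ ^ (ν - m)
      ≤ 2 ^ (γ * |ν - m|) * (τ ^ γ) ^ (ν - m) * (j:ℝ) ^ (γ * (ν - m)) := by
    rcases le_or_gt 0 (ν - m) with hcase | hcase
    · have h1 : σ ^ (ν - m) ≤ ((j:ℝ) ^ γ * τ ^ γ) ^ (ν - m) :=
        Real.rpow_le_rpow hσpos.le hσu hcase
      have h2 : ((j:ℝ) ^ γ * τ ^ γ) ^ (ν - m)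
          = (j:ℝ) ^ (γ * (ν - m)) * (τ ^ γ) ^ (ν - m) := by
        rw [Real.mul_rpow (Real.rpow_nonneg hjpos.le γ) hτγ.le, ← Real.rpow_mul hjpos.le]
      have h3 : (1:ℝ) ≤ 2 ^ (γ * |ν - m|) :=
        Real.one_le_rpow one_le_two (mul_nonneg hγ0.le (abs_nonneg _))
      calc σ ^ (ν - m) ≤ (j:ℝ) ^ (γ * (ν - m)) * (τ ^ γ) ^ (ν - m) := h2 ▸ h1
        _ = 1 * ((τ ^ γ) ^ (ν - m) * (j:ℝ) ^ (γ * (ν - m))) := by ring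
        _ ≤ 2 ^ (γ * |ν - m|) * ((τ ^ γ) ^ (ν - m) * (j:ℝ) ^ (γ * (ν - m))) :=
            mul_le_mul_of_nonneg_right h3 (by positivity)
        _ = 2 ^ (γ * |ν - m|) * (τ ^ γ) ^ (ν - m) * (j:ℝ) ^ (γ * (ν - m)) := by ring
    · have habs : |ν - m| = -(ν - m) := abs_of_neg hcase
      have hj2 : (j:ℝ) / 2 ≤ (j:ℝ) - 1 := by linarith
      have hhalf : ((j:ℝ) / 2) ^ γ * τ ^ γ ≤ σ :=
        le_trans (mul_le_mul_of_nonneg_right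
          (Real.rpow_le_rpow (by positivity) hj2 hγ0.le) hτγ.le) hσl
      have hhpos : (0:ℝ) < ((j:ℝ) / 2) ^ γ * τ ^ γ :=
        mul_pos (Real.rpow_pos_of_pos (by positivity) γ) hτγ
      have h1 : σ ^ (ν - m) ≤ (((j:ℝ) / 2) ^ γ * τ ^ γ) ^ (ν - m) :=
        Real.rpow_le_rpow_of_nonpos hhpos hhalf hcase.le
      have h2 : (((j:ℝ) / 2) ^ γ * τ ^ γ) ^ (ν - m)
          = ((j:ℝ) / 2) ^ (γ * (ν - m)) * (τ ^ γ) ^ (ν - m) := by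
        rw [Real.mul_rpow (Real.rpow_nonneg (by positivity) γ) hτγ.le,
          ← Real.rpow_mul (by positivity : (0:ℝ) ≤ (j:ℝ) / 2)]
      have h3 : ((j:ℝ) / 2) ^ (γ * (ν - m))
          = (j:ℝ) ^ (γ * (ν - m)) * 2 ^ (-(γ * (ν - m))) := by
        rw [Real.div_rpow hjpos.le (by norm_num : (0:ℝ) ≤ 2),
          Real.rpow_neg (by norm_num : (0:ℝ) ≤ 2), div_eq_mul_inv]
      have h4 : (2:ℝ) ^ (-(γ * (ν - m))) = 2 ^ (γ * |ν - m|) := by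
        rw [habs]; ring_nf
      calc σ ^ (ν - m) ≤ ((j:ℝ) / 2) ^ (γ * (ν - m)) * (τ ^ γ) ^ (ν - m) := h2 ▸ h1
        _ = 2 ^ (γ * |ν - m|) * (τ ^ γ) ^ (ν - m) * (j:ℝ) ^ (γ * (ν - m)) := by
            rw [h3, ← h4]; ring
  calc ((j:ℝ) ^ γ * τ ^ γ - ((j:ℝ) - 1) ^ γ * τ ^ γ) ^ m * σ ^ (ν - m)
      ≤ (γ ^ m * (j:ℝ) ^ ((γ - 1) * m) * (τ ^ γ) ^ m) *
        (2 ^ (γ * |ν - m|) * (τ ^ γ) ^ (ν - m) * (j:ℝ) ^ (γ * (ν - m))) :=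
        mul_le_mul hstep hσbound (Real.rpow_nonneg hσpos.le _) (by positivity)
    _ = 2 ^ (γ * |ν - m|) * γ ^ m * ((τ ^ γ) ^ m * (τ ^ γ) ^ (ν - m)) *
        ((j:ℝ) ^ ((γ - 1) * m) * (j:ℝ) ^ (γ * (ν - m))) := by ring
    _ = 2 ^ (γ * |ν - m|) * γ ^ m * (τ ^ γ) ^ ν * (j:ℝ) ^ (γ * ν - m) := by
        rw [← Real.rpow_add hτγ, ← Real.rpow_add hjpos,
          show m + (ν - m) = ν by ring, show (γ - 1) * m + γ * (ν - m) = γ * ν - m by ring]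

theorem graded_mesh_sum_estimate (T γ m ν : ℝ)
    (hT : 0 < T) (hγ : 1 ≤ γ) (hm : 0 < m) :
    ∃ C : ℝ, 0 < C ∧
      ∀ N : ℕ, 2 ≤ N → ∀ n : ℕ, 2 ≤ n → n ≤ N →
        ∀ σ : ℕ → ℝ,
          (∀ j ∈ Finset.Icc 2 n,
            σ j ∈ Set.Icc (gradedMesh T γ N (j - 1)) (gradedMesh T γ N j)) →
          ((γ * ν < m - 1 →
            (∑ j ∈ Finset.Icc 2 n,
              (gradedMesh T γ N j - gradedMesh T γ N (j - 1)) ^ m * σ j ^ (ν - m)) ≤ C * (N : ℝ) ^ (-(γ * ν))) ∧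
          (γ * ν = m - 1 →
            (∑ j ∈ Finset.Icc 2 n,
              (gradedMesh T γ N j - gradedMesh T γ N (j - 1)) ^ m * σ j ^ (ν - m)) ≤ C * (N : ℝ) ^ (-(m - 1)) * Real.log n) ∧
          (m - 1 < γ * ν →
            (∑ j ∈ Finset.Icc 2 n,
              (gradedMesh T γ N j - gradedMesh T γ N (j - 1)) ^ m * σ j ^ (ν - m)) ≤ C * (N : ℝ) ^ (-(m - 1)) *
              gradedMesh T γ N n ^ (ν - (m - 1) / γ))) := by
  have hγ0 : (0:ℝ) < γ := by linarith
  set e : ℝ := γ * ν - m with he_def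
  set Cb : ℝ := 2 ^ (γ * |ν - m|) * γ ^ m with hCb_def
  have hCb : 0 < Cb := by
    apply mul_pos (Real.rpow_pos_of_pos two_pos _) (Real.rpow_pos_of_pos hγ0 _)
  set C1 : ℝ := Cb * T ^ ν * (1 / (-(e + 1))) with hC1_def
  set C2 : ℝ := Cb * T ^ ν with hC2_def
  set C3 : ℝ := Cb * T ^ ((m - 1) / γ) * (2 ^ |e| / (e + 1)) with hC3_def
  refine ⟨max 1 (max C1 (max C2 C3)), lt_of_lt_of_le one_pos (le_max_left _ _), ?_⟩
  intro N hN n hn hnN σ hσmem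
  set τ : ℝ := T ^ (1 / γ) / (N : ℝ) with hτ_def
  have hNpos : (0:ℝ) < (N:ℝ) := by positivity
  have hτ : 0 < τ := div_pos (Real.rpow_pos_of_pos hT _) hNpos
  have hτγ : 0 < τ ^ γ := Real.rpow_pos_of_pos hτ γ
  have hmesh : ∀ j : ℕ, gradedMesh T γ N j = (j:ℝ) ^ γ * τ ^ γ := fun j =>
    Real.mul_rpow (Nat.cast_nonneg j) hτ.le
  have hmesh' : ∀ j : ℕ, 2 ≤ j → gradedMesh T γ N (j - 1) = ((j:ℝ) - 1) ^ γ * τ ^ γ := by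
    intro j hj
    rw [hmesh (j - 1), cast_pred_eq hj]
  -- key bound on the sum
  have hkey : (∑ j ∈ Finset.Icc 2 n,
      (gradedMesh T γ N j - gradedMesh T γ N (j - 1)) ^ m * σ j ^ (ν - m))
      ≤ Cb * (τ ^ γ) ^ ν * ∑ j ∈ Finset.Icc 2 n, (j:ℝ) ^ e := by
    rw [Finset.mul_sum]
    refine Finset.sum_le_sum ?_
    intro j hj
    have hj2 : 2 ≤ j := (Finset.mem_Icc.mp hj).1
    obtain ⟨hl, hu⟩ := hσmem j hj
    rw [hmesh' j hj2] at hl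
    rw [hmesh j] at hu
    rw [hmesh j, hmesh' j hj2]
    have := graded_term_bound (ν := ν) hγ hm hτ hj2 hl hu
    calc _ ≤ 2 ^ (γ * |ν - m|) * γ ^ m * (τ ^ γ) ^ ν * (j:ℝ) ^ (γ * ν - m) := this
      _ = Cb * (τ ^ γ) ^ ν * (j:ℝ) ^ e := by rw [hCb_def, he_def]
  -- global factor algebra
  have hτγT : (τ ^ γ) ^ ν = T ^ ν * (N:ℝ) ^ (-(γ * ν)) := by
    have h1 : τ ^ γ = T * ((N:ℝ) ^ γ)⁻¹ := by
      rw [hτ_def, Real.div_rpow (Real.rpow_nonneg hT.le _) (Nat.cast_nonneg N),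
        ← Real.rpow_mul hT.le, one_div_mul_cancel hγ0.ne', Real.rpow_one, div_eq_mul_inv]
    rw [h1, Real.mul_rpow hT.le (by positivity),
      ← Real.rpow_neg_one ((N:ℝ) ^ γ), ← Real.rpow_mul (Nat.cast_nonneg N),
      ← Real.rpow_mul (Nat.cast_nonneg N)]
    ring_nf
  have hCle1 : C1 ≤ max 1 (max C1 (max C2 C3)) :=
    le_max_of_le_right (le_max_left _ _)
  have hCle2 : C2 ≤ max 1 (max C1 (max C2 C3)) :=
    le_max_of_le_right (le_max_of_le_right (le_max_left _ _))
  have hCle3 : C3 ≤ max 1 (max C1 (max C2 C3)) :=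
    le_max_of_le_right (le_max_of_le_right (le_max_right _ _))
  have hn1 : 1 ≤ n := by omega
  refine ⟨?_, ?_, ?_⟩
  · -- case 1 : γν < m - 1
    intro hcase
    have he1 : e < -1 := by rw [he_def]; linarith
    have hK1 : (0:ℝ) < 1 / (-(e + 1)) := by
      apply div_pos one_pos; linarith
    have hS := sum_rpow_le_of_lt_neg_one he1 n hn1
    calc (∑ j ∈ Finset.Icc 2 n,
        (gradedMesh T γ N j - gradedMesh T γ N (j - 1)) ^ m * σ j ^ (ν - m))
        ≤ Cb * (τ ^ γ) ^ ν * ∑ j ∈ Finset.Icc 2 n, (j:ℝ) ^ e := hkey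
      _ ≤ Cb * (τ ^ γ) ^ ν * (1 / (-(e + 1))) :=
          mul_le_mul_of_nonneg_left hS (by positivity)
      _ = C1 * (N:ℝ) ^ (-(γ * ν)) := by rw [hτγT, hC1_def]; ring
      _ ≤ max 1 (max C1 (max C2 C3)) * (N:ℝ) ^ (-(γ * ν)) :=
          mul_le_mul_of_nonneg_right hCle1 (Real.rpow_nonneg hNpos.le _)
  · -- case 2 : γν = m - 1
    intro hcase
    have he1 : e = -1 := by rw [he_def]; linarith
    have hS : ∑ j ∈ Finset.Icc 2 n, (j:ℝ) ^ e ≤ Real.log n := by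
      rw [he1]; exact sum_inv_le_log n hn1
    have hlogn : 0 ≤ Real.log n := Real.log_nonneg (by exact_mod_cast hn1)
    calc (∑ j ∈ Finset.Icc 2 n,
        (gradedMesh T γ N j - gradedMesh T γ N (j - 1)) ^ m * σ j ^ (ν - m))
        ≤ Cb * (τ ^ γ) ^ ν * ∑ j ∈ Finset.Icc 2 n, (j:ℝ) ^ e := hkey
      _ ≤ Cb * (τ ^ γ) ^ ν * Real.log n :=
          mul_le_mul_of_nonneg_left hS (by positivity)
      _ = C2 * (N:ℝ) ^ (-(m - 1)) * Real.log n := by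
          rw [hτγT, hC2_def, hcase]; ring
      _ ≤ max 1 (max C1 (max C2 C3)) * (N:ℝ) ^ (-(m - 1)) * Real.log n := by
          apply mul_le_mul_of_nonneg_right _ hlogn
          exact mul_le_mul_of_nonneg_right hCle2 (Real.rpow_nonneg hNpos.le _)
  · -- case 3 : m - 1 < γν
    intro hcase
    have he1 : -1 < e := by rw [he_def]; linarith
    have h1 : (0:ℝ) < e + 1 := by linarith
    have hS := sum_rpow_le_of_neg_one_lt he1 n hn1
    have hnτ : (0:ℝ) < (n:ℝ) * τ := by
      have : (0:ℝ) < (n:ℝ) := by positivity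
      positivity
    have hgrad : gradedMesh T γ N n ^ (ν - (m - 1) / γ)
        = (n:ℝ) ^ (e + 1) * τ ^ (e + 1) := by
      show (((n:ℝ) * τ) ^ γ) ^ (ν - (m - 1) / γ) = _
      rw [← Real.rpow_mul hnτ.le]
      rw [show γ * (ν - (m - 1) / γ) = e + 1 by
        rw [he_def]; field_simp; ring]
      exact Real.mul_rpow (by positivity) hτ.le
    have hτm1 : τ ^ (m - 1) = T ^ ((m - 1) / γ) * (N:ℝ) ^ (-(m - 1)) := by
      rw [hτ_def, Real.div_rpow (Real.rpow_nonneg hT.le _) (Nat.cast_nonneg N),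
        ← Real.rpow_mul hT.le, Real.rpow_neg (Nat.cast_nonneg N), div_eq_mul_inv,
        show 1 / γ * (m - 1) = (m - 1) / γ by ring]
    have hfactor : (τ ^ γ) ^ ν * (n:ℝ) ^ (e + 1)
        = T ^ ((m - 1) / γ) * (N:ℝ) ^ (-(m - 1)) * gradedMesh T γ N n ^ (ν - (m - 1) / γ) := by
      rw [hgrad, ← Real.rpow_mul hτ.le,
        show γ * ν = (e + 1) + (m - 1) by rw [he_def]; ring,
        Real.rpow_add hτ, hτm1]
      ring
    calc (∑ j ∈ Finset.Icc 2 n,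
        (gradedMesh T γ N j - gradedMesh T γ N (j - 1)) ^ m * σ j ^ (ν - m))
        ≤ Cb * (τ ^ γ) ^ ν * ∑ j ∈ Finset.Icc 2 n, (j:ℝ) ^ e := hkey
      _ ≤ Cb * (τ ^ γ) ^ ν * (2 ^ |e| / (e + 1) * (n:ℝ) ^ (e + 1)) :=
          mul_le_mul_of_nonneg_left hS (by positivity)
      _ = Cb * (2 ^ |e| / (e + 1)) * ((τ ^ γ) ^ ν * (n:ℝ) ^ (e + 1)) := by ring
      _ = C3 * (N:ℝ) ^ (-(m - 1)) * gradedMesh T γ N n ^ (ν - (m - 1) / γ) := by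
          rw [hfactor, hC3_def]; ring
      _ ≤ max 1 (max C1 (max C2 C3)) * (N:ℝ) ^ (-(m - 1)) *
          gradedMesh T γ N n ^ (ν - (m - 1) / γ) := by
          apply mul_le_mul_of_nonneg_right _ (Real.rpow_nonneg (by rw [hmesh n]; positivity) _)
          exact mul_le_mul_of_nonneg_right hCle3 (Real.rpow_nonneg hNpos.le _)

end
end
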